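/- arXiv:2111.04558 — 2 statements merged into one kernel-verified Lean document; each statement's English description precedes it below -/
import Mathlib

section
/- Let f: ℝ → ℝ be differentiable with |f'(θ)| ≤ B for all θ, and suppose f'(θ) = −f'(−θ) holds for the derivative of F(θ) = f(θ) − (w/2)·θ² where w = v(1−λ+λc) with v > 0, 0 < c < 1, λ ∈ [0,1], λ ≤ ε < 1. If v(1−ε) ≥ sup_{θ>δ} f'(θ)/θ + κ/δ for some δ, κ > 0, then for all θ with |θ| > δ: F'(θ) < −κ when θ > δ and F'(θ) > κ when θ < −δ. -/
open Real Set

/-- Outside the δ-neighbourhood of 0, the ELBO gradient points toward the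
    origin with magnitude at least κ. -/
theorem elbo_gradient_points_to_origin
    (f : ℝ → ℝ) (B v c lam ε δ κ w : ℝ)
    (hf : Differentiable ℝ f)
    (hB : ∀ θ : ℝ, |deriv f θ| ≤ B)
    (hodd : ∀ θ : ℝ, deriv f θ = -(deriv f (-θ)))
    (hv : 0 < v) (hc0 : 0 < c) (hc1 : c < 1)
    (hlam0 : 0 ≤ lam) (hlam1 : lam ≤ 1) (hlamε : lam ≤ ε) (hε : ε < 1)
    (hw : w = v * (1 - lam + lam * c))
    (hδ : 0 < δ) (hκ : 0 < κ)
    (hcond : v * (1 - ε) ≥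
      sSup ((fun θ => deriv f θ / θ) '' Set.Ioi δ) + κ / δ)
    (F : ℝ → ℝ) (hF : ∀ θ, F θ = f θ - (w / 2) * θ ^ 2) :
    ∀ θ : ℝ, (θ > δ → deriv F θ < -κ) ∧ (θ < -δ → deriv F θ > κ) := by
  have hFeq : F = fun θ => f θ - (w / 2) * θ ^ 2 := funext hF
  have hFd : ∀ θ : ℝ, deriv F θ = deriv f θ - w * θ := by
    intro θ
    rw [hFeq]
    have h1 : Differentiable ℝ (fun θ : ℝ => (w / 2) * θ ^ 2) := by
      fun_prop
    rw [deriv_fun_sub (hf θ) (h1 θ)]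
    have : deriv (fun θ : ℝ => (w / 2) * θ ^ 2) θ = (w / 2) * (2 * θ) := by
      rw [deriv_const_mul _ (by fun_prop)]
      simp [deriv_pow_field]
    rw [this]; ring
  -- w ≥ v(1-ε)
  have hwge : v * (1 - ε) ≤ w := by
    have h0 : 0 ≤ v * (ε - lam + lam * c) :=
      mul_nonneg hv.le (by nlinarith [mul_nonneg hlam0 hc0.le])
    nlinarith
  have hS : BddAbove ((fun θ => deriv f θ / θ) '' Set.Ioi δ) := by
    refine ⟨B / δ, ?_⟩
    rintro y ⟨x, hx, rfl⟩
    have hx' : δ < x := hx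
    have hx0 : 0 < x := lt_trans hδ hx'
    have hBnn : 0 ≤ B := le_trans (abs_nonneg _) (hB x)
    calc deriv f x / x ≤ |deriv f x| / x := by gcongr; exact le_abs_self _
      _ ≤ B / x := by gcongr; exact hB x
      _ ≤ B / δ := by gcongr
  -- main bound for positive side
  have key : ∀ θ : ℝ, θ > δ → deriv F θ < -κ := by
    intro θ hθ
    have hθ0 : 0 < θ := lt_trans hδ hθ
    have hmem : deriv f θ / θ ∈ (fun θ => deriv f θ / θ) '' Set.Ioi δ :=
      ⟨θ, hθ, rfl⟩
    have hle : deriv f θ / θ ≤ sSup ((fun θ => deriv f θ / θ) '' Set.Ioi δ) :=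
      le_csSup hS hmem
    have h2 : deriv f θ / θ ≤ w - κ / δ := by
      have := hcond
      linarith
    have h3 : deriv f θ ≤ (w - κ / δ) * θ := by
      have := (div_le_iff₀ hθ0).mp h2
      linarith
    rw [hFd]
    have hκδ : κ / δ * δ = κ := div_mul_cancel₀ κ (ne_of_gt hδ)
    have h4 : κ / δ * δ < κ / δ * θ :=
      mul_lt_mul_of_pos_left hθ (div_pos hκ hδ)
    nlinarith
  intro θ
  refine ⟨key θ, fun hθ => ?_⟩
  have h1 : deriv F (-θ) < -κ := key (-θ) (by linarith)
  have h2 : deriv F θ = -(deriv F (-θ)) := by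
    rw [hFd, hFd, hodd θ]; ring
  linarith
end

section
/- Let G: ℝ → ℝ satisfy |G(x)| ≤ B + v|x|, and suppose G is such that for x = δ − α with α ∈ [0,δ], G(x) ≤ min(B + v(δ−α), −κ + α(C+v)) and G(x) ≥ −(B + v(δ−α)), where B, C, κ ≥ 0, v > 0, δ > 0. If 0 < η ≤ α/(B + v(δ+α)) for all α ≥ min(δ, κ/(C+v)), and η ≤ (2δ−α)/(B+v(δ−α)) for all α ∈ [0,δ], then for any x ∈ [−δ, δ], the step x' = x + η·G(x) satisfies x' ∈ [−δ, δ]. -/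
/-- The gradient step maps the δ-neighbourhood of zero into itself. -/
theorem gradient_step_invariant
    (G : ℝ → ℝ) (B C v δ κ η : ℝ)
    (hB : 0 ≤ B) (hC : 0 ≤ C) (hκ : 0 ≤ κ) (hv : 0 < v) (hδ : 0 < δ)
    (hbound : ∀ x : ℝ, |G x| ≤ B + v * |x|)
    (hupper : ∀ α ∈ Set.Icc (0:ℝ) δ,
      G (δ - α) ≤ min (B + v * (δ - α)) (-κ + α * (C + v)))
    (hlower : ∀ α ∈ Set.Icc (0:ℝ) δ, G (δ - α) ≥ -(B + v * (δ - α)))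
    (hsymm : ∀ x : ℝ, G (-x) = -G x)
    (hη0 : 0 < η)
    (hη1 : ∀ α : ℝ, min δ (κ / (C + v)) ≤ α → η ≤ α / (B + v * (δ + α)))
    (hη2 : ∀ α ∈ Set.Icc (0:ℝ) δ, η ≤ (2 * δ - α) / (B + v * (δ - α))) :
    ∀ x ∈ Set.Icc (-δ) δ, x + η * G x ∈ Set.Icc (-δ) δ := by
  have hCv : 0 < C + v := by linarith
  have key : ∀ y ∈ Set.Icc (0:ℝ) δ, y + η * G y ∈ Set.Icc (-δ) δ := by
    intro y hy
    obtain ⟨hy0, hyδ⟩ := hy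
    set α : ℝ := δ - y with hα
    have hαmem : α ∈ Set.Icc (0:ℝ) δ := ⟨by simp [hα]; linarith, by simp [hα]; linarith⟩
    have hα0 : 0 ≤ α := hαmem.1
    have hyval : δ - α = y := by simp [hα]
    have hD0 : 0 ≤ B + v * (δ - α) := by rw [hyval]; nlinarith
    -- lower bound
    have hlow : -(B + v * y) ≤ G y := by
      have := hlower α hαmem; rw [hyval] at this; linarith
    have hη2' := hη2 α hαmem
    have hstep : η * (B + v * (δ - α)) ≤ 2 * δ - α := by
      rcases hD0.lt_or_eq with hDpos | hDeq
      · rw [le_div_iff₀ hDpos] at hη2'; exact hη2'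
      · rw [← hDeq]; have := hαmem.2; linarith
    have hlower' : -δ ≤ y + η * G y := by
      have h1 : η * (-(B + v * y)) ≤ η * G y :=
        mul_le_mul_of_nonneg_left hlow (le_of_lt hη0)
      rw [hyval] at hstep
      nlinarith
    refine ⟨hlower', ?_⟩
    -- upper bound
    have hup := hupper α hαmem
    rw [hyval] at hup
    by_cases hcase : α * (C + v) ≤ κ
    · have hGle : G y ≤ 0 := le_trans (le_trans hup (min_le_right _ _)) (by linarith)
      nlinarith
    · push_neg at hcase
      have hmin : min δ (κ / (C + v)) ≤ α := by
        apply min_le_of_right_le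
        rw [div_le_iff₀ hCv]; linarith
      have hη1' := hη1 α hmin
      have hD2pos : 0 < B + v * (δ + α) := by nlinarith
      have hstep2 : η * (B + v * (δ + α)) ≤ α := by
        rw [le_div_iff₀ hD2pos] at hη1'; linarith
      have hGle : G y ≤ B + v * (δ + α) := by
        have := le_trans hup (min_le_left _ _); nlinarith
      have : η * G y ≤ α := le_trans (mul_le_mul_of_nonneg_left hGle (le_of_lt hη0)) hstep2
      linarith
  intro x hx
  obtain ⟨hx1, hx2⟩ := hx
  rcases le_or_gt 0 x with hx0 | hx0
  · exact key x ⟨hx0, hx2⟩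
  · have hmem := key (-x) ⟨by linarith, by linarith⟩
    have hGx : G x = - G (-x) := by rw [← hsymm (-x), neg_neg]
    obtain ⟨h1, h2⟩ := hmem
    constructor <;> [skip; skip] <;> rw [hGx] <;> nlinarith
end
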